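/- Conversely, if x : [0,T] → ℝ is continuous and satisfies x(t) - ∫_0^t h(t,s)x(s) ds = f(t) with h(t,s) = -K'_t(t,s)/K(t,t), f(t) = g'(t)/K(t,t), g(0) = 0, K continuous and K'_t continuous, K(t,t) ≠ 0, then x satisfies the first-kind equation ∫_0^t K(t,s) x(s) ds = g(t) for all t ∈ [0,T]. -/
import Mathlib


open intervalIntegral Set MeasureTheory

/-- Conversely, a continuous solution of the second-kind equation
`x(t) - ∫₀ᵗ h(t,s)x(s)ds = f(t)` with `h = -K'_t/K(t,t)`, `f = g'/K(t,t)`, `g(0)=0`,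
also solves the first-kind equation `∫₀ᵗ K(t,s)x(s)ds = g(t)`. -/
theorem stmt5 (T : ℝ) (hT : 0 < T) (K Kt : ℝ → ℝ → ℝ) (g g' x : ℝ → ℝ)
    (hx : ContinuousOn x (Icc 0 T))
    (hKt : ∀ t s : ℝ, HasDerivAt (fun u => K u s) (Kt t s) t)
    (hKtc : ContinuousOn (fun p : ℝ × ℝ => Kt p.1 p.2)
      {p : ℝ × ℝ | 0 ≤ p.2 ∧ p.2 ≤ p.1 ∧ p.1 ≤ T})
    (hKc : ContinuousOn (fun p : ℝ × ℝ => K p.1 p.2)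
      {p : ℝ × ℝ | 0 ≤ p.2 ∧ p.2 ≤ p.1 ∧ p.1 ≤ T})
    (hKdiag : ∀ t ∈ Icc (0:ℝ) T, K t t ≠ 0)
    (hg' : ∀ t ∈ Icc (0:ℝ) T, HasDerivAt g (g' t) t)
    (hg0 : g 0 = 0)
    (heq : ∀ t ∈ Icc (0:ℝ) T,
      x t - ∫ s in (0:ℝ)..t, (-(Kt t s) / K t t) * x s = g' t / K t t) :
    ∀ t ∈ Icc (0:ℝ) T, (∫ s in (0:ℝ)..t, K t s * x s) = g t := by
  intro t ht
  obtain ⟨ht0, htT⟩ := ht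
  -- the triangle
  set D : Set (ℝ × ℝ) := {p : ℝ × ℝ | 0 ≤ p.2 ∧ p.2 ≤ p.1 ∧ p.1 ≤ t} with hD
  have hDsub : D ⊆ {p : ℝ × ℝ | 0 ≤ p.2 ∧ p.2 ≤ p.1 ∧ p.1 ≤ T} := by
    intro p hp; exact ⟨hp.1, hp.2.1, hp.2.2.trans htT⟩
  have hDclosed : IsClosed D := by
    have h1 : IsClosed {p : ℝ × ℝ | 0 ≤ p.2} := isClosed_le continuous_const continuous_snd
    have h2 : IsClosed {p : ℝ × ℝ | p.2 ≤ p.1} := isClosed_le continuous_snd continuous_fst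
    have h3 : IsClosed {p : ℝ × ℝ | p.1 ≤ t} := isClosed_le continuous_fst continuous_const
    exact (h1.inter (h2.inter h3) : _)
  have hDcomp : IsCompact D := by
    refine IsCompact.of_isClosed_subset (isCompact_Icc.prod isCompact_Icc :
      IsCompact (Icc (0:ℝ) t ×ˢ Icc (0:ℝ) t)) hDclosed ?_
    intro p hp
    exact ⟨⟨hp.1.trans hp.2.1, hp.2.2⟩, ⟨hp.1, hp.2.1.trans hp.2.2⟩⟩
  -- the integrand on the triangle
  set G : ℝ × ℝ → ℝ := fun p => Kt p.1 p.2 * x p.2 with hG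
  have hGc : ContinuousOn G D := by
    apply (hKtc.mono hDsub).mul
    exact hx.comp continuous_snd.continuousOn (fun p hp => ⟨hp.1, (hp.2.1.trans hp.2.2).trans htT⟩)
  have hGint : IntegrableOn G D := hGc.integrableOn_compact hDcomp
  set f : ℝ × ℝ → ℝ := D.indicator G with hf
  have hfint : Integrable f (volume : Measure (ℝ × ℝ)) :=
    (integrable_indicator_iff hDclosed.measurableSet).2 hGint
  have hfint' : Integrable f ((volume : Measure ℝ).prod (volume : Measure ℝ)) := by
    rwa [← Measure.volume_eq_prod]
  -- left iterated integral = ∫ u in 0..t, Ψ u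
  have hL : (fun u : ℝ => ∫ s : ℝ, f (u, s)) =
      (Icc (0:ℝ) t).indicator (fun u => ∫ s in (0:ℝ)..u, Kt u s * x s) := by
    funext u
    by_cases hu : u ∈ Icc (0:ℝ) t
    · have h1 : (fun s : ℝ => f (u, s)) = (Icc (0:ℝ) u).indicator (fun s => Kt u s * x s) := by
        funext s
        simp only [hf]
        by_cases hs : s ∈ Icc (0:ℝ) u
        · rw [Set.indicator_of_mem hs,
            Set.indicator_of_mem (show (u, s) ∈ D from ⟨hs.1, hs.2, hu.2⟩)]
        · rw [Set.indicator_of_notMem hs, Set.indicator_of_notMem]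
          intro hmem
          exact hs ⟨hmem.1, hmem.2.1⟩
      rw [h1, MeasureTheory.integral_indicator measurableSet_Icc,
        MeasureTheory.integral_Icc_eq_integral_Ioc, ← intervalIntegral.integral_of_le hu.1,
        Set.indicator_of_mem hu]
    · rw [Set.indicator_of_notMem hu]
      have h1 : (fun s : ℝ => f (u, s)) = fun _ => (0:ℝ) := by
        funext s
        simp only [hf]
        apply Set.indicator_of_notMem
        intro hmem
        exact hu ⟨hmem.1.trans hmem.2.1, hmem.2.2⟩
      rw [h1, MeasureTheory.integral_zero]
  -- right iterated integral = ∫ s in 0..t, Φ s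
  have hR : (fun s : ℝ => ∫ u : ℝ, f (u, s)) =
      (Icc (0:ℝ) t).indicator (fun s => ∫ u in s..t, Kt u s * x s) := by
    funext s
    by_cases hs : s ∈ Icc (0:ℝ) t
    · have h1 : (fun u : ℝ => f (u, s)) = (Icc s t).indicator (fun u => Kt u s * x s) := by
        funext u
        simp only [hf]
        by_cases hu : u ∈ Icc s t
        · rw [Set.indicator_of_mem hu,
            Set.indicator_of_mem (show (u, s) ∈ D from ⟨hs.1, hu.1, hu.2⟩)]
        · rw [Set.indicator_of_notMem hu, Set.indicator_of_notMem]
          intro hmem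
          exact hu ⟨hmem.2.1, hmem.2.2⟩
      rw [h1, MeasureTheory.integral_indicator measurableSet_Icc,
        MeasureTheory.integral_Icc_eq_integral_Ioc, ← intervalIntegral.integral_of_le hs.2,
        Set.indicator_of_mem hs]
    · rw [Set.indicator_of_notMem hs]
      have h1 : (fun u : ℝ => f (u, s)) = fun _ => (0:ℝ) := by
        funext u
        simp only [hf]
        apply Set.indicator_of_notMem
        intro hmem
        exact hs ⟨hmem.1, (hmem.2.1.trans hmem.2.2)⟩
      rw [h1, MeasureTheory.integral_zero]
  -- Fubini
  have hswap : (∫ u : ℝ, ∫ s : ℝ, f (u, s)) = ∫ s : ℝ, ∫ u : ℝ, f (u, s) :=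
    MeasureTheory.integral_integral_swap (f := fun u s => f (u, s)) hfint'
  -- integrabilities of the partial integrals
  have hΨint : IntervalIntegrable (fun u => ∫ s in (0:ℝ)..u, Kt u s * x s) volume 0 t := by
    have h1 : Integrable (fun u : ℝ => ∫ s : ℝ, f (u, s)) volume := hfint'.integral_prod_left
    rw [hL] at h1
    rw [intervalIntegrable_iff_integrableOn_Ioc_of_le ht0]
    exact ((integrable_indicator_iff measurableSet_Icc).1 h1).mono_set Ioc_subset_Icc_self
  have hΦint : IntervalIntegrable (fun s => ∫ u in s..t, Kt u s * x s) volume 0 t := by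
    have h1 : Integrable (fun s : ℝ => ∫ u : ℝ, f (u, s)) volume := hfint'.integral_prod_right
    rw [hR] at h1
    rw [intervalIntegrable_iff_integrableOn_Ioc_of_le ht0]
    exact ((integrable_indicator_iff measurableSet_Icc).1 h1).mono_set Ioc_subset_Icc_self
  -- Fubini as interval integrals
  have hfub : (∫ s in (0:ℝ)..t, ∫ u in s..t, Kt u s * x s) =
      ∫ u in (0:ℝ)..t, ∫ s in (0:ℝ)..u, Kt u s * x s := by
    have e1 : (∫ u : ℝ, ∫ s : ℝ, f (u, s)) = ∫ u in (0:ℝ)..t, ∫ s in (0:ℝ)..u, Kt u s * x s := by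
      rw [hL, MeasureTheory.integral_indicator measurableSet_Icc,
        MeasureTheory.integral_Icc_eq_integral_Ioc, ← intervalIntegral.integral_of_le ht0]
    have e2 : (∫ s : ℝ, ∫ u : ℝ, f (u, s)) = ∫ s in (0:ℝ)..t, ∫ u in s..t, Kt u s * x s := by
      rw [hR, MeasureTheory.integral_indicator measurableSet_Icc,
        MeasureTheory.integral_Icc_eq_integral_Ioc, ← intervalIntegral.integral_of_le ht0]
    rw [← e1, ← e2, hswap]
  -- diagonal term continuity
  have hdiagc : ContinuousOn (fun u : ℝ => K u u * x u) (Icc 0 t) := by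
    apply ContinuousOn.mul
    · exact hKc.comp (continuous_id.prodMk continuous_id).continuousOn
        (fun u hu => ⟨hu.1, le_refl u, hu.2.trans htT⟩)
    · exact hx.mono (Icc_subset_Icc le_rfl htT)
  have hdiagint : IntervalIntegrable (fun u : ℝ => K u u * x u) volume 0 t := by
    apply ContinuousOn.intervalIntegrable
    rwa [uIcc_of_le ht0]
  -- step A: rewrite K t s via FTC in the first variable
  have stepA : (∫ s in (0:ℝ)..t, K t s * x s) =
      ∫ s in (0:ℝ)..t, (K s s * x s + ∫ u in s..t, Kt u s * x s) := by
    apply intervalIntegral.integral_congr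
    intro s hs
    rw [uIcc_of_le ht0] at hs
    have hKtint : IntervalIntegrable (fun u => Kt u s) volume s t := by
      apply ContinuousOn.intervalIntegrable
      rw [uIcc_of_le hs.2]
      exact hKtc.comp (continuous_id.prodMk continuous_const).continuousOn
        (fun u hu => ⟨hs.1, hu.1, hu.2.trans htT⟩)
    have hftc : (∫ u in s..t, Kt u s) = K t s - K s s :=
      intervalIntegral.integral_eq_sub_of_hasDerivAt (fun u _ => hKt u s) hKtint
    have h4 : K t s = K s s + ∫ u in s..t, Kt u s := by rw [hftc]; ring
    show K t s * x s = K s s * x s + ∫ u in s..t, Kt u s * x s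
    rw [h4, add_mul, ← intervalIntegral.integral_mul_const]
  -- step D: identify the integrand with g'
  have stepD : ∀ u ∈ Icc (0:ℝ) t,
      K u u * x u + (∫ s in (0:ℝ)..u, Kt u s * x s) = g' u := by
    intro u hu
    have huT : u ∈ Icc (0:ℝ) T := ⟨hu.1, hu.2.trans htT⟩
    have hKu : K u u ≠ 0 := hKdiag u huT
    have h2 : (∫ s in (0:ℝ)..u, (-(Kt u s) / K u u) * x s) =
        -(K u u)⁻¹ * ∫ s in (0:ℝ)..u, Kt u s * x s := by
      rw [← intervalIntegral.integral_const_mul]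
      apply intervalIntegral.integral_congr
      intro s _
      field_simp
    have h3 := heq u huT
    rw [h2] at h3
    rw [eq_div_iff hKu] at h3
    have h6 : (K u u)⁻¹ * K u u = 1 := inv_mul_cancel₀ hKu
    linear_combination h3 - (∫ s in (0:ℝ)..u, Kt u s * x s) * h6
  -- integrability of g' on [0,t]
  have hg'int : IntervalIntegrable g' volume 0 t := by
    rw [intervalIntegrable_iff_integrableOn_Ioc_of_le ht0]
    have hsum : IntegrableOn (fun u : ℝ => K u u * x u + ∫ s in (0:ℝ)..u, Kt u s * x s)
        (Ioc 0 t) := by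
      have := hdiagint.add hΨint
      rwa [intervalIntegrable_iff_integrableOn_Ioc_of_le ht0] at this
    exact hsum.congr_fun (fun u hu => stepD u (Ioc_subset_Icc_self hu)) measurableSet_Ioc
  -- FTC for g
  have hgftc : (∫ u in (0:ℝ)..t, g' u) = g t := by
    rw [intervalIntegral.integral_eq_sub_of_hasDerivAt
      (fun u hu => hg' u (by rw [uIcc_of_le ht0] at hu; exact ⟨hu.1, hu.2.trans htT⟩)) hg'int,
      hg0, sub_zero]
  -- put everything together
  rw [stepA, intervalIntegral.integral_add hdiagint hΦint, hfub,
    ← intervalIntegral.integral_add hdiagint hΨint, ← hgftc]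
  apply intervalIntegral.integral_congr
  intro u hu
  rw [uIcc_of_le ht0] at hu
  exact stepD u hu
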